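/- Let x : ℕ → Fin 2 and suppose the orbit closure of x contains two periodic sequences y₁ and y₂ (σ^{t₁}y₁ = y₁ and σ^{t₂}y₂ = y₂ for some t₁, t₂ ≥ 1) with distinct orbits, i.e., {σⁿy₁ : n ∈ ℕ} ∩ {σⁿy₂ : n ∈ ℕ} = ∅. Then x is not pattern Sturmian; in fact there exists n ≥ 1 with p*_x(n) ≥ 2n + 1. -/

import Mathlib

open Set

abbrev Seq2 := ℕ → Fin 2

def patLang (x : Seq2) (τ : Finset ℕ) : Set ((s : τ) → Fin 2) :=
  {w | ∃ m : ℕ, ∀ s : τ, w s = x (m + (s : ℕ))}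

noncomputable def pstar (x : Seq2) (n : ℕ) : ℕ :=
  sSup {c : ℕ | ∃ τ : Finset ℕ, τ.card = n ∧ (patLang x τ).ncard = c}

def PatternSturmian (x : Seq2) : Prop := ∀ n : ℕ, 1 ≤ n → pstar x n = 2 * n

def shiftMap (x : Seq2) : Seq2 := fun n => x (n + 1)

def orbitClosure (x : Seq2) : Set Seq2 :=
  closure {y : Seq2 | ∃ m : ℕ, y = fun n => x (m + n)}

/-! If `y₁` were a shift of `x`, then `x` would be eventually periodic, its orbit closure would
be its finite orbit, and the orbits of `y₁` and `y₂` would meet. So `y₁` and `y₂` occur in `x` at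
arbitrarily large positions; pigeonholing these positions modulo a common period `T`, suitable
shifts of them occur at arbitrarily large multiples of `T`. Reading `x` along a progression
`c + kT` on which the two shifts differ gives a sequence with arbitrarily long runs of both
letters `a ≠ b`. On the window `{0, p, q}` given by an occurrence of `aba`, such a sequence shows
every triple except possibly `bab`, so `x` shows at least `7 = 2 · 3 + 1` patterns on the window
`{0, pT, qT}`. -/

open Function

lemma shiftMap_iterate_apply (y : Seq2) (k n : ℕ) : shiftMap^[k] y n = y (n + k) := by
  induction k generalizing y with
  | zero => rfl
  | succ k ih => rw [iterate_succ_apply, ih]; simp only [shiftMap, add_assoc]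

lemma isPeriodicPt_shiftMap_iff {y : Seq2} {t : ℕ} :
    IsPeriodicPt shiftMap t y ↔ Periodic y t := by
  simp only [IsPeriodicPt, IsFixedPt, funext_iff, shiftMap_iterate_apply, Periodic]

lemma orbitClosure_eq_closure_range (x : Seq2) :
    orbitClosure x = closure (range fun m => shiftMap^[m] x) := by
  rw [orbitClosure]
  congr 1
  ext y
  constructor <;> rintro ⟨m, rfl⟩ <;>
    exact ⟨m, funext fun n => by dsimp only; rw [shiftMap_iterate_apply, add_comm]⟩

lemma exists_prefix_match {x y : Seq2} (hy : y ∈ orbitClosure x) (L : ℕ) :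
    ∃ m, ∀ i < L, x (m + i) = y i := by
  have hU : IsOpen ((Iio L).pi fun i => {y i}) :=
    isOpen_set_pi (finite_Iio L) fun i _ => isOpen_discrete _
  obtain ⟨z, hz, m, rfl⟩ := mem_closure_iff.mp hy _ hU fun i _ => rfl
  exact ⟨m, fun i hi => hz i hi⟩

lemma orbitClosure_eq_range_of_isPeriodicPt {x : Seq2} {m t : ℕ} (ht : 0 < t)
    (h : IsPeriodicPt shiftMap t (shiftMap^[m] x)) :
    orbitClosure x = range fun k => shiftMap^[k] x := by
  have hfin : (range fun k => shiftMap^[k] x).Finite := by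
    refine ((finite_Iio (m + t)).image fun k => shiftMap^[k] x).subset ?_
    rintro _ ⟨n, rfl⟩
    rcases lt_or_ge n m with hn | hn
    · exact ⟨n, mem_Iio.mpr (by omega), rfl⟩
    · have := Nat.mod_lt (n - m) ht
      refine ⟨(n - m) % t + m, mem_Iio.mpr (by omega), ?_⟩
      dsimp only
      rw [iterate_add_apply, h.iterate_mod_apply, ← iterate_add_apply, Nat.sub_add_cancel hn]
  rw [orbitClosure_eq_closure_range, hfin.isClosed.closure_eq]

def AppearsInfinitelyOften (x y : Seq2) : Prop :=
  ∀ L N : ℕ, ∃ m ≥ N, ∀ i < L, x (m + i) = y i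

lemma eq_iterate_or_appearsInfinitelyOften {x y : Seq2} (hy : y ∈ orbitClosure x) :
    (∃ m, y = shiftMap^[m] x) ∨ AppearsInfinitelyOften x y := by
  refine or_iff_not_imp_right.mpr fun hnot => ?_
  simp only [AppearsInfinitelyOften, not_forall, not_exists, not_and] at hnot
  obtain ⟨L₀, N₀, hbad⟩ := hnot
  choose m hm using fun L => exists_prefix_match hy (L + L₀)
  have hlt : ∀ L, m L < N₀ := fun L => by
    by_contra! hge
    obtain ⟨i, hi, hne⟩ := hbad _ hge
    exact hne (hm L i (by omega))
  obtain ⟨k, hk⟩ := Finite.exists_infinite_fiber fun L => (⟨m L, hlt L⟩ : Fin N₀)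
  refine ⟨k, funext fun n => ?_⟩
  obtain ⟨L, hL, hnL⟩ := (infinite_coe_iff.mp hk).exists_gt n
  rw [shiftMap_iterate_apply, add_comm, ← congrArg Fin.val hL]
  exact (hm L n (by omega)).symm

lemma appearsInfinitelyOften_of_isPeriodicPt {x y z : Seq2} {t : ℕ} (ht : 0 < t)
    (hy : y ∈ orbitClosure x) (hz : z ∈ orbitClosure x) (hp : IsPeriodicPt shiftMap t y)
    (hdisj : ∀ n m : ℕ, shiftMap^[n] y ≠ shiftMap^[m] z) : AppearsInfinitelyOften x y := by
  refine (eq_iterate_or_appearsInfinitelyOften hy).resolve_left ?_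
  rintro ⟨m, rfl⟩
  rw [orbitClosure_eq_range_of_isPeriodicPt ht hp] at hz
  obtain ⟨k, rfl⟩ := hz
  exact hdisj k m (by rw [← iterate_add_apply, ← iterate_add_apply, add_comm])

lemma AppearsInfinitelyOften.exists_aligned {x y : Seq2} (h : AppearsInfinitelyOften x y)
    {T : ℕ} (hT : 0 < T) :
    ∃ r, ∀ L N : ℕ, ∃ k ≥ N, ∀ i < L, x (k * T + i) = y (r + i) := by
  choose m hmL hm using fun L => h (L + T) (L * T)
  obtain ⟨r, hr⟩ :=
    Finite.exists_infinite_fiber fun L => (⟨T - m L % T, by omega⟩ : Fin (T + 1))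
  refine ⟨r, fun L N => ?_⟩
  obtain ⟨L', hL', hL'gt⟩ := (infinite_coe_iff.mp hr).exists_gt (max L N)
  have hr' : (r : ℕ) = T - m L' % T := (congrArg Fin.val hL').symm
  have hdiv := Nat.div_add_mod (m L') T
  have hmod := Nat.mod_lt (m L') hT
  have hk : (m L' / T + 1) * T = m L' + r := by rw [hr', add_mul, mul_comm]; omega
  have hkN : L' ≤ m L' / T := (Nat.le_div_iff_mul_le hT).mpr (hmL L')
  refine ⟨m L' / T + 1, by omega, fun i hi => ?_⟩
  rw [hk, add_assoc]
  exact hm L' _ (by omega)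

def HasLongRuns (z : Seq2) (a : Fin 2) : Prop :=
  ∀ ℓ N : ℕ, ∃ s ≥ N, ∀ i < ℓ, z (s + i) = a

lemma hasLongRuns_of_aligned {x y : Seq2} {T r : ℕ} (hy : Periodic y T)
    (h : ∀ L N : ℕ, ∃ k ≥ N, ∀ i < L, x (k * T + i) = y (r + i)) (c : ℕ) :
    HasLongRuns (fun k => x (c + k * T)) (y (c + r)) := by
  intro ℓ N
  obtain ⟨k, hkN, hk⟩ := h (c + ℓ * T + 1) N
  refine ⟨k, hkN, fun i hi => ?_⟩
  have hiT : i * T ≤ ℓ * T := Nat.mul_le_mul_right T hi.le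
  calc x (c + (k + i) * T) = x (k * T + (c + i * T)) := by ring_nf
    _ = y (c + r + i * T) := by rw [hk _ (by omega)]; ring_nf
    _ = y (c + r) := by simpa only [smul_eq_mul] using hy.nsmul i (c + r)

lemma HasLongRuns.exists_ge {z : Seq2} {a : Fin 2} (h : HasLongRuns z a) (N : ℕ) :
    ∃ s ≥ N, z s = a := by
  obtain ⟨s, hs, hrun⟩ := h 1 N
  exact ⟨s, hs, hrun 0 one_pos⟩

lemma HasLongRuns.exists_ne_before_run {z : Seq2} {a : Fin 2} (ha : HasLongRuns z a) {i : ℕ}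
    (hi : z i ≠ a) (q : ℕ) :
    ∃ m, z m ≠ a ∧ ∀ j, 0 < j → j ≤ q → z (m + j) = a := by
  obtain ⟨s, hs, hrun⟩ := ha q (i + 1)
  have his : i ≤ s - 1 := by omega
  set m := Nat.findGreatest (fun k => z k ≠ a) (s - 1)
  have hm : m ≤ s - 1 := Nat.findGreatest_le _
  refine ⟨m, Nat.findGreatest_spec (P := fun k => z k ≠ a) his hi, fun j hj hjq => ?_⟩
  rcases lt_or_ge (m + j) s with hlt | hge
  · exact not_not.mp
      (Nat.findGreatest_is_greatest (P := fun k => z k ≠ a) (n := s - 1) (k := m + j)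
        (by omega) (by omega))
  · rw [← Nat.add_sub_cancel' hge]
    exact hrun _ (by omega)

lemma HasLongRuns.exists_run_before_ne {z : Seq2} {a : Fin 2} (ha : HasLongRuns z a)
    (hne : ∀ N, ∃ i ≥ N, z i ≠ a) (q : ℕ) :
    ∃ m, (∀ j < q, z (m + j) = a) ∧ z (m + q) ≠ a := by
  obtain ⟨s, -, hrun⟩ := ha q 0
  have hex : ∃ j, z (s + j) ≠ a := by
    obtain ⟨i, hi, hzi⟩ := hne s
    exact ⟨i - s, by rwa [Nat.add_sub_cancel' hi]⟩
  have hqj : q ≤ Nat.find hex := not_lt.mp fun hlt => Nat.find_spec hex (hrun _ hlt)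
  refine ⟨s + (Nat.find hex - q), fun j hj => ?_, ?_⟩
  · rw [add_assoc]
    exact not_not.mp (Nat.find_min hex (by omega))
  · rw [add_assoc, Nat.sub_add_cancel hqj]
    exact Nat.find_spec hex

def tripleLang (x : Seq2) (d e : ℕ) : Set (Fin 2 × Fin 2 × Fin 2) :=
  range fun m => (x m, x (m + d), x (m + e))

lemma fin_two_eq_or_eq {a b : Fin 2} (hab : a ≠ b) (v : Fin 2) : v = a ∨ v = b := by
  omega

-- The window `{0, p, q}` is read off an occurrence of `aba`; all other triples except `bab`
-- then come from the runs and from the transitions between them.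
lemma exists_seven_le_ncard_tripleLang {z : Seq2} {a b : Fin 2} (hab : a ≠ b)
    (ha : HasLongRuns z a) (hb : HasLongRuns z b) :
    ∃ p q, 0 < p ∧ p < q ∧ 7 ≤ (tripleLang z p q).ncard := by
  obtain ⟨i, -, hzi⟩ := ha.exists_ge 0
  obtain ⟨j, hj, hzj⟩ := hb.exists_ge (i + 1)
  obtain ⟨k, hk, hzk⟩ := ha.exists_ge (j + 1)
  refine ⟨j - i, k - i, by omega, by omega, ?_⟩
  set p := j - i
  set q := k - i
  have ne_of_apply_eq {u v : Fin 2} (huv : u ≠ v) {m : ℕ} (h : z m = u) : z m ≠ v := h ▸ huv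
  have apply_eq_of_ne {u v : Fin 2} (huv : u ≠ v) {m : ℕ} (h : z m ≠ u) : z m = v :=
    (fin_two_eq_or_eq huv _).resolve_left h
  have const {u : Fin 2} (hu : HasLongRuns z u) : (u, u, u) ∈ tripleLang z p q := by
    obtain ⟨s, -, hrun⟩ := hu (q + 1) 0
    refine ⟨s, Prod.ext ?_ (Prod.ext (hrun p (by omega)) (hrun q (by omega)))⟩
    simpa using hrun 0 (by omega)
  have ne_run {u v : Fin 2} (huv : u ≠ v) (hu : HasLongRuns z u) (hv : HasLongRuns z v) :
      (v, u, u) ∈ tripleLang z p q := by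
    obtain ⟨n, -, hn⟩ := hv.exists_ge 0
    obtain ⟨m, hm, hrun⟩ := hu.exists_ne_before_run (ne_of_apply_eq huv.symm hn) q
    exact ⟨m, Prod.ext (apply_eq_of_ne huv hm)
      (Prod.ext (hrun p (by omega) (by omega)) (hrun q (by omega) le_rfl))⟩
  have run_ne {u v : Fin 2} (huv : u ≠ v) (hu : HasLongRuns z u) (hv : HasLongRuns z v) :
      (u, u, v) ∈ tripleLang z p q := by
    obtain ⟨m, hrun, hm⟩ := hu.exists_run_before_ne
      (fun N => (hv.exists_ge N).imp fun n ⟨hn, h⟩ => ⟨hn, ne_of_apply_eq huv.symm h⟩) q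
    refine ⟨m, Prod.ext ?_ (Prod.ext (hrun p (by omega)) (apply_eq_of_ne huv hm))⟩
    simpa using hrun 0 (by omega)
  have aba : (a, b, a) ∈ tripleLang z p q :=
    ⟨i, by simp only [show i + p = j by omega, show i + q = k by omega, hzi, hzj, hzk]⟩
  have hsub : {(b, a, b)}ᶜ ⊆ tripleLang z p q := by
    rintro ⟨u, v, w⟩ huvw
    rcases fin_two_eq_or_eq hab u with rfl | rfl <;>
    rcases fin_two_eq_or_eq hab v with rfl | rfl <;>
    rcases fin_two_eq_or_eq hab w with rfl | rfl
    exacts [const ha, run_ne hab ha hb, aba, ne_run hab.symm hb ha, ne_run hab ha hb,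
      absurd rfl huvw, run_ne hab.symm hb ha, const hb]
  calc 7 = ({(b, a, b)}ᶜ : Set (Fin 2 × Fin 2 × Fin 2)).ncard := by
        rw [ncard_compl]; simp
    _ ≤ (tripleLang z p q).ncard := ncard_le_ncard hsub

lemma tripleLang_subset_of_sample (x : Seq2) (c T d e : ℕ) :
    tripleLang (fun k => x (c + k * T)) d e ⊆ tripleLang x (d * T) (e * T) := by
  rintro _ ⟨m, rfl⟩
  exact ⟨c + m * T, by simp only [add_mul, add_assoc]⟩

lemma ncard_patLang_le_pstar (x : Seq2) (τ : Finset ℕ) :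
    (patLang x τ).ncard ≤ pstar x τ.card := by
  refine le_csSup ⟨2 ^ τ.card, ?_⟩ ⟨τ, rfl, rfl⟩
  rintro _ ⟨σ, hσ, rfl⟩
  calc (patLang x σ).ncard ≤ Nat.card (σ → Fin 2) := ncard_le_card _
    _ = 2 ^ τ.card := by simp [hσ]

lemma ncard_tripleLang_le_pstar (x : Seq2) {d e : ℕ} (hd : 0 < d) (hde : d < e) :
    (tripleLang x d e).ncard ≤ pstar x 3 := by
  have hcard : ({0, d, e} : Finset ℕ).card = 3 := by
    rw [Finset.card_eq_three]
    exact ⟨0, d, e, by omega, by omega, by omega, rfl⟩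
  have hsub : tripleLang x d e ⊆ (fun w => (w ⟨0, by simp⟩, w ⟨d, by simp⟩, w ⟨e, by simp⟩)) ''
      patLang x {0, d, e} := by
    rintro _ ⟨m, rfl⟩
    exact ⟨fun s => x (m + s), ⟨m, fun s => rfl⟩, rfl⟩
  calc (tripleLang x d e).ncard ≤ _ := ncard_le_ncard hsub
    _ ≤ (patLang x {0, d, e}).ncard := ncard_image_le
    _ ≤ pstar x 3 := hcard ▸ ncard_patLang_le_pstar x _

/-- if the orbit closure of `x` contains two periodic sequences with
distinct (disjoint) orbits, then `x` is not pattern Sturmian; in fact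
`pstar x n ≥ 2n + 1` for some `n ≥ 1` (Proposition 6.7 of the paper). -/
theorem stmt17 (x y₁ y₂ : Seq2)
    (hy₁ : y₁ ∈ orbitClosure x) (hy₂ : y₂ ∈ orbitClosure x)
    (t₁ t₂ : ℕ) (ht₁ : 1 ≤ t₁) (ht₂ : 1 ≤ t₂)
    (hp₁ : shiftMap^[t₁] y₁ = y₁) (hp₂ : shiftMap^[t₂] y₂ = y₂)
    (hdistinct : ∀ n m : ℕ, shiftMap^[n] y₁ ≠ shiftMap^[m] y₂) :
    ¬ PatternSturmian x ∧ ∃ n : ℕ, 1 ≤ n ∧ 2 * n + 1 ≤ pstar x n := by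
  have hT : 0 < t₁ * t₂ := Nat.mul_pos ht₁ ht₂
  have hper₁ : Periodic y₁ (t₁ * t₂) := by
    simpa only [smul_eq_mul, mul_comm] using (isPeriodicPt_shiftMap_iff.mp hp₁).nsmul t₂
  have hper₂ : Periodic y₂ (t₁ * t₂) := by
    simpa only [smul_eq_mul] using (isPeriodicPt_shiftMap_iff.mp hp₂).nsmul t₁
  obtain ⟨r₁, hr₁⟩ :=
    (appearsInfinitelyOften_of_isPeriodicPt ht₁ hy₁ hy₂ hp₁ hdistinct).exists_aligned hT
  obtain ⟨r₂, hr₂⟩ := (appearsInfinitelyOften_of_isPeriodicPt ht₂ hy₂ hy₁ hp₂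
    fun n m h => hdistinct m n h.symm).exists_aligned hT
  obtain ⟨c, hc⟩ := ne_iff.mp (hdistinct r₁ r₂)
  rw [shiftMap_iterate_apply, shiftMap_iterate_apply] at hc
  obtain ⟨p, q, hp, hpq, h7⟩ := exists_seven_le_ncard_tripleLang hc
    (hasLongRuns_of_aligned hper₁ hr₁ c) (hasLongRuns_of_aligned hper₂ hr₂ c)
  have h3 : 7 ≤ pstar x 3 := calc
    7 ≤ _ := h7
    _ ≤ _ := ncard_le_ncard (tripleLang_subset_of_sample x c _ p q)
    _ ≤ pstar x 3 := ncard_tripleLang_le_pstar x (Nat.mul_pos hp hT) (by gcongr)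
  exact ⟨fun h => by have := h 3 (by norm_num); omega, 3, by norm_num, h3⟩
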